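/- Let M be a left divisibility monoid, a ∈ M with right normal form h_m ⋯ h_1, and z a hypercube. Define z_0 = z, h''_i = h(h_i z_{i-1}) and z_i by h_i z_{i-1} = z_i h''_i for i = 1, …, m. Then the right normal form of az is z_m · h''_m ⋯ h''_1 (dropping z_m if trivial), and in particular z_m is a hypercube. -/

import Mathlib

section Defs
variable {M : Type*} [Monoid M]

/-- `a` left-divides `b` (`b` is a right multiple of `a`). -/
def LDvd (a b : M) : Prop := ∃ d, b = a * d

/-- `a` right-divides `b` (`b` is a left multiple of `a`). -/
def RDvd (a b : M) : Prop := ∃ d, b = d * a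

/-- `a` is an irreducible element of the monoid. -/
def IsIrred (a : M) : Prop := a ≠ 1 ∧ ∀ b c, a = b * c → b = 1 ∨ c = 1

/-- `c` is a right lcm of `a` and `b`. -/
def IsRightLcm (a b c : M) : Prop :=
  LDvd a c ∧ LDvd b c ∧ ∀ m, LDvd a m → LDvd b m → LDvd c m

/-- `c` is a right lcm of the set `s`. -/
def IsRightLcmSet (s : Set M) (c : M) : Prop :=
  (∀ x ∈ s, LDvd x c) ∧ ∀ m, (∀ x ∈ s, LDvd x m) → LDvd c m

/-- A hypercube: a right lcm of a finite set of irreducible elements. -/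
def IsHypercube (h : M) : Prop :=
  ∃ s : Finset M, (∀ x ∈ s, IsIrred x) ∧ IsRightLcmSet (↑s) h

/-- `h` is the maximal hypercube right-dividing `a`. -/
def IsMaxHC (a h : M) : Prop :=
  IsHypercube h ∧ RDvd h a ∧ ∀ k, IsHypercube k → RDvd k a → RDvd k h

/-- The list `L = [h_p, …, h_1]` of nontrivial hypercubes is a right normal form:
`h_i` is the maximal hypercube right-dividing `h_p ⋯ h_i`. -/
def IsRNF (hmap : M → M) (L : List M) : Prop :=
  (∀ x ∈ L, IsHypercube x ∧ x ≠ 1) ∧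
  ∀ n (hn : n < L.length), hmap ((L.take (n + 1)).prod) = L.get ⟨n, hn⟩

end Defs

/-- A left divisibility monoid: cancellative, generated by its finitely many
irreducibles, any two elements have a left gcd, and every set of left divisors
is a finite distributive lattice under left divisibility. -/
def IsLDM (M : Type*) [Monoid M] : Prop :=
  (∀ a b c : M, a * b = a * c → b = c) ∧
  (∀ a b c : M, b * a = c * a → b = c) ∧
  (∃ S : Finset M, (∀ x ∈ S, IsIrred x) ∧ Submonoid.closure (S : Set M) = ⊤) ∧
  (∀ a b : M, ∃ g, LDvd g a ∧ LDvd g b ∧ ∀ c, LDvd c a → LDvd c b → LDvd c g) ∧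
  (∀ a : M, {b : M | LDvd b a}.Finite) ∧
  (∀ a : M, ∃ i : DistribLattice {b : M // LDvd b a},
      ∀ x y : {b : M // LDvd b a}, i.le x y ↔ LDvd x.1 y.1)

/-!
Slide `z` leftwards through the normal form: the relations `h_i z_{i-1} = z_i h''_i` telescope to
`a z = z_m h''_m ⋯ h''_1`. Since `z_{i-1}` is a hypercube right-dividing `h(h_i z_{i-1}) = h''_i`,
cancelling gives `h_i = z_i u`, so each `z_i` left-divides the hypercube `h_i` and is itself a
hypercube (by distributivity of the lattice of left divisors). Normality follows from
`h(ab) = h(h(a) b)`: `h(z_m h''_m ⋯ h''_i) = h(h_m ⋯ h_i z_{i-1}) = h(h_i z_{i-1}) = h''_i`.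
-/

section Divisibility
variable {M : Type*} [Monoid M]

lemma LDvd.refl (a : M) : LDvd a a := ⟨1, (mul_one a).symm⟩

lemma LDvd.one_left (a : M) : LDvd 1 a := ⟨a, (one_mul a).symm⟩

lemma LDvd.trans {a b c : M} : LDvd a b → LDvd b c → LDvd a c
  | ⟨d, hd⟩, ⟨e, he⟩ => ⟨d * e, by rw [he, hd, mul_assoc]⟩

lemma RDvd.refl (a : M) : RDvd a a := ⟨1, (one_mul a).symm⟩

lemma RDvd.trans {a b c : M} : RDvd a b → RDvd b c → RDvd a c
  | ⟨d, hd⟩, ⟨e, he⟩ => ⟨e * d, by rw [he, hd, mul_assoc]⟩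

lemma IsIrred.isHypercube {p : M} (hp : IsIrred p) : IsHypercube p :=
  ⟨{p}, by simpa using hp, by simpa using LDvd.refl p, fun _ hm => hm p (by simp)⟩

lemma IsIrred.eq_one_or_eq_of_ldvd {p d : M} (hp : IsIrred p) (hd : LDvd d p) :
    d = 1 ∨ d = p := by
  obtain ⟨c, hc⟩ := hd
  rcases hp.2 d c hc with h | h
  · exact .inl h
  · exact .inr (by rw [hc, h, mul_one])

end Divisibility

lemma List.prod_take_mul_eq_mul_prod_take {M : Type*} [Monoid M] {L T : List M} {W : ℕ → M}
    (h : ∀ n (hL : n < L.length) (hT : n < T.length), L[n] * W (n + 1) = W n * T[n]) :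
    ∀ j, j ≤ L.length → j ≤ T.length → (L.take j).prod * W j = W 0 * (T.take j).prod
  | 0, _, _ => by simp
  | j + 1, hL, hT => by
    rw [List.prod_take_succ L j hL, List.prod_take_succ T j hT, mul_assoc, h j hL hT,
      ← mul_assoc, List.prod_take_mul_eq_mul_prod_take h j (by omega) (by omega), mul_assoc]

lemma List.prod_filter_ne_one {M : Type*} [Monoid M] [DecidableEq M] (l : List M) :
    (l.filter fun x => decide (x ≠ 1)).prod = l.prod := by
  induction l <;> grind

namespace IsLDM
variable {M : Type*} [Monoid M]

lemma mul_right_cancel (hM : IsLDM M) {a b c : M} (h : b * a = c * a) : b = c :=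
  hM.2.1 a b c h

lemma induction_on_mul_irred (hM : IsLDM M) {P : M → Prop} (x : M) (one : P 1)
    (mul_irred : ∀ a p, IsIrred p → P a → P (a * p)) : P x := by
  obtain ⟨S, hS, hgen⟩ := hM.2.2.1
  exact Submonoid.induction_of_closure_eq_top_right hgen x one
    fun a p hp => mul_irred a p (hS p hp)

lemma ldvd_antisymm (hM : IsLDM M) {x y : M} (hxy : LDvd x y) (hyx : LDvd y x) : x = y := by
  obtain ⟨i, hi⟩ := hM.2.2.2.2.2 y
  let := i
  have : (⟨x, hxy⟩ : {b : M // LDvd b y}) = ⟨y, LDvd.refl y⟩ :=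
    le_antisymm ((hi _ _).mpr hxy) ((hi _ _).mpr hyx)
  exact congrArg Subtype.val this

lemma mul_eq_one (hM : IsLDM M) {u v : M} : u * v = 1 ↔ u = 1 ∧ v = 1 := by
  refine ⟨fun h => ?_, fun ⟨hu, hv⟩ => by rw [hu, hv, one_mul]⟩
  have hu : u = 1 := hM.ldvd_antisymm ⟨v, h.symm⟩ (LDvd.one_left u)
  exact ⟨hu, by rwa [hu, one_mul] at h⟩

lemma rdvd_antisymm (hM : IsLDM M) {x y : M} (hxy : RDvd x y) (hyx : RDvd y x) : x = y := by
  obtain ⟨d, rfl⟩ := hxy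
  obtain ⟨e, he⟩ := hyx
  have hed : e * d = 1 := hM.mul_right_cancel (by rw [one_mul, mul_assoc, ← he])
  rw [(hM.mul_eq_one.mp hed).2, one_mul]

lemma exists_irred_rdvd (hM : IsLDM M) {x : M} (hx : x ≠ 1) : ∃ p, IsIrred p ∧ RDvd p x := by
  induction x using hM.induction_on_mul_irred with
  | one => exact absurd rfl hx
  | mul_irred a p hp _ => exact ⟨p, hp, a, rfl⟩

/-- In the distributive lattice of left divisors of `k = lcm s`, `x = ⨆ p ∈ s, x ⊓ p`, and each
`x ⊓ p` is `1` or `p`. -/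
lemma ldvd_of_forall_irred_ldvd (hM : IsLDM M) {s : Finset M} {k x g : M}
    (hs : ∀ p ∈ s, IsIrred p) (hk : IsRightLcmSet ↑s k) (hx : LDvd x k) (hg : LDvd g k)
    (hxg : ∀ p ∈ s, LDvd p x → LDvd p g) : LDvd x g := by
  obtain ⟨i, hi⟩ := hM.2.2.2.2.2 k
  let := i
  let : OrderBot {b : M // LDvd b k} :=
    { bot := ⟨1, LDvd.one_left k⟩, bot_le := fun b => (hi _ _).mpr (LDvd.one_left b.1) }
  let P : s → {b : M // LDvd b k} := fun p => ⟨p, hk.1 p p.2⟩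
  let X : {b : M // LDvd b k} := ⟨x, hx⟩
  have hX : X ≤ s.attach.sup P := (hi _ _).mpr <| hx.trans <| hk.2 _ fun p hp =>
    (hi _ _).mp (Finset.le_sup (f := P) (Finset.mem_attach s ⟨p, hp⟩))
  have hmeet : ∀ p ∈ s.attach, X ⊓ P p ≤ ⟨g, hg⟩ := by
    intro p _
    have hmeet_p : LDvd (X ⊓ P p).1 p := (hi _ _).mp (inf_le_right (a := X) (b := P p))
    rcases (hs p p.2).eq_one_or_eq_of_ldvd hmeet_p with h | h
    · exact (hi _ _).mpr (h ▸ LDvd.one_left g)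
    · exact (hi _ _).mpr (h ▸ hxg p p.2 (h ▸ (hi _ _).mp (inf_le_left (a := X) (b := P p))))
  refine (hi X ⟨g, hg⟩).mp ?_
  calc X = X ⊓ s.attach.sup P := (inf_eq_left.mpr hX).symm
    _ = s.attach.sup fun p => X ⊓ P p := Finset.sup_inf_distrib_left _ _ _
    _ ≤ _ := Finset.sup_le hmeet

lemma isHypercube_of_ldvd (hM : IsLDM M) {x k : M} (hk : IsHypercube k) (hx : LDvd x k) :
    IsHypercube x := by
  classical
  obtain ⟨s, hs, hlcm⟩ := hk
  refine ⟨s.filter (LDvd · x), fun p hp => hs p (Finset.mem_filter.mp hp).1,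
    fun p hp => (Finset.mem_filter.mp hp).2, fun m hm => ?_⟩
  obtain ⟨g, hgx, hgm, hg⟩ := hM.2.2.2.1 x m
  refine LDvd.trans (hM.ldvd_of_forall_irred_ldvd hs hlcm hx (hgx.trans hx) ?_) hgm
  exact fun p hp hpx => hg p hpx (hm p (by simp [hp, hpx]))

section MaxHypercube
variable {hmap : M → M}

lemma hmap_eq_self (hM : IsLDM M) (hspec : ∀ a, IsMaxHC a (hmap a)) {k : M}
    (hk : IsHypercube k) : hmap k = k :=
  hM.rdvd_antisymm (hspec k).2.1 ((hspec k).2.2 k hk (RDvd.refl k))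

lemma hmap_ne_one (hM : IsLDM M) (hspec : ∀ a, IsMaxHC a (hmap a)) {x : M} (hx : x ≠ 1) :
    hmap x ≠ 1 := by
  obtain ⟨p, hp, hpx⟩ := hM.exists_irred_rdvd hx
  obtain ⟨d, hd⟩ := (hspec x).2.2 p hp.isHypercube hpx
  intro h
  exact hp.1 (hM.mul_eq_one.mp (h ▸ hd).symm).2

lemma hmap_mul_irred (hM : IsLDM M) (hspec : ∀ a, IsMaxHC a (hmap a)) (c : M) {p : M}
    (hp : IsIrred p) : hmap (hmap c * p) = hmap (c * p) := by
  obtain ⟨c', hc'⟩ := (hspec c).2.1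
  have hle : RDvd (hmap (hmap c * p)) (hmap (c * p)) :=
    (hspec (c * p)).2.2 _ (hspec _).1 <|
      (hspec _).2.1.trans ⟨c', by rw [← mul_assoc, ← hc']⟩
  -- `p` is a hypercube, so `hmap (c * p) = k * p`; then `k` right-divides `c`, hence `hmap c`.
  obtain ⟨k, hk⟩ := (hspec (c * p)).2.2 p hp.isHypercube ⟨c, rfl⟩
  obtain ⟨d, hd⟩ := (hspec (c * p)).2.1
  rw [hk, ← mul_assoc] at hd
  have hkc : RDvd k c := ⟨d, hM.mul_right_cancel hd⟩
  obtain ⟨e, he⟩ := (hspec c).2.2 k (hM.isHypercube_of_ldvd (hspec _).1 ⟨p, hk⟩) hkc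
  have hge : RDvd (hmap (c * p)) (hmap (hmap c * p)) :=
    (hspec _).2.2 _ (hspec _).1 ⟨e, by rw [he, mul_assoc, ← hk]⟩
  exact hM.rdvd_antisymm hle hge

lemma hmap_mul_hmap (hM : IsLDM M) (hspec : ∀ a, IsMaxHC a (hmap a)) (a b : M) :
    hmap (hmap a * b) = hmap (a * b) := by
  induction b using hM.induction_on_mul_irred generalizing a with
  | one => rw [mul_one, mul_one, hM.hmap_eq_self hspec (hspec a).1]
  | mul_irred c p hp ih =>
    rw [← mul_assoc, ← mul_assoc, ← hM.hmap_mul_irred hspec _ hp, ih,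
      hM.hmap_mul_irred hspec _ hp]

lemma isHypercube_of_mul_eq_mul_hmap (hM : IsLDM M) (hspec : ∀ a, IsMaxHC a (hmap a))
    {h z z' : M} (hh : IsHypercube h) (hz : IsHypercube z) (heq : h * z = z' * hmap (h * z)) :
    IsHypercube z' := by
  obtain ⟨u, hu⟩ := (hspec (h * z)).2.2 z hz ⟨h, rfl⟩
  rw [hu, ← mul_assoc] at heq
  exact hM.isHypercube_of_ldvd hh ⟨u, hM.mul_right_cancel heq⟩

lemma isRNF_filter_cons [DecidableEq M] (hM : IsLDM M) (hspec : ∀ a, IsMaxHC a (hmap a))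
    {x : M} {T : List M} (hx : IsHypercube x) (hT : ∀ y ∈ T, IsHypercube y ∧ y ≠ 1)
    (hpre : ∀ n (hn : n < T.length), hmap (x * (T.take (n + 1)).prod) = T[n]) :
    IsRNF hmap ((x :: T).filter fun y => decide (y ≠ 1)) := by
  have hTfil : T.filter (fun y => decide (y ≠ 1)) = T :=
    List.filter_eq_self.mpr fun y hy => decide_eq_true (hT y hy).2
  by_cases hx1 : x = 1
  · rw [List.filter_cons_of_neg (by simp [hx1]), hTfil]
    refine ⟨hT, fun n hn => ?_⟩
    simpa [hx1] using hpre n hn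
  · rw [List.filter_cons_of_pos (by simp [hx1]), hTfil]
    refine ⟨?_, fun n hn => ?_⟩
    · simpa [hx, hx1] using hT
    · cases n with
      | zero => simpa using hM.hmap_eq_self hspec hx
      | succ n => simpa using hpre n (by simpa using hn)

theorem _root_.IsRNF.mul_hypercube [DecidableEq M] (hM : IsLDM M)
    (hspec : ∀ a, IsMaxHC a (hmap a)) {L T : List M} (hL : IsRNF hmap L)
    (hlen : T.length = L.length) {W : ℕ → M} (hW : IsHypercube (W L.length))
    (hT : ∀ n (hn : n < L.length) (hn' : n < T.length), T[n] = hmap (L[n] * W (n + 1)))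
    (hmul : ∀ n (hn : n < L.length) (hn' : n < T.length), L[n] * W (n + 1) = W n * T[n]) :
    IsHypercube (W 0) ∧ IsRNF hmap ((W 0 :: T).filter fun x => decide (x ≠ 1)) ∧
      ((W 0 :: T).filter fun x => decide (x ≠ 1)).prod = L.prod * W L.length := by
  have hW0 : IsHypercube (W 0) := by
    refine Nat.decreasingInduction (motive := fun n _ => IsHypercube (W n))
      (fun n hn hWn => ?_) hW (Nat.zero_le _)
    have hn' : n < T.length := hlen ▸ hn
    exact hM.isHypercube_of_mul_eq_mul_hmap hspec (hL.1 _ (List.getElem_mem _)).1 hWn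
      (hT n hn hn' ▸ hmul n hn hn')
  have hprod := List.prod_take_mul_eq_mul_prod_take hmul
  have hTmem : ∀ y ∈ T, IsHypercube y ∧ y ≠ 1 := by
    intro y hy
    obtain ⟨n, hn', rfl⟩ := List.mem_iff_getElem.mp hy
    rw [hT n (hlen ▸ hn') hn']
    exact ⟨(hspec _).1, hM.hmap_ne_one hspec fun h =>
      (hL.1 _ (List.getElem_mem _)).2 (hM.mul_eq_one.mp h).1⟩
  have hpre : ∀ n (hn : n < T.length), hmap (W 0 * (T.take (n + 1)).prod) = T[n] := by
    intro n hn'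
    have hn : n < L.length := hlen ▸ hn'
    rw [← hprod (n + 1) hn hn', ← hM.hmap_mul_hmap hspec, hL.2 n hn, List.get_eq_getElem,
      hT n hn hn']
  refine ⟨hW0, hM.isRNF_filter_cons hspec hW0 hTmem hpre, ?_⟩
  rw [List.prod_filter_ne_one, List.prod_cons, ← List.take_of_length_le hlen.le,
    ← hprod L.length le_rfl hlen.ge, List.take_length]

end MaxHypercube

end IsLDM

/-- Proposition 24(ii): the right normal form of `a * z` from that of `a`,
via `z_0 = z`, `h''_i = h(h_i z_{i-1})` and `h_i z_{i-1} = z_i h''_i`. -/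
theorem stmt_12 {M : Type*} [Monoid M] [DecidableEq M] (hM : IsLDM M)
    (hmap : M → M) (hspec : ∀ a : M, IsMaxHC a (hmap a))
    (L : List M) (hrnf : IsRNF hmap L) (a : M) (ha : a = L.prod)
    (z : M) (hz : IsHypercube z) :
    ∀ Z H'' : ℕ → M, Z 0 = z →
      (∀ i (h1 : 1 ≤ i) (h2 : i ≤ L.length),
        H'' i = hmap (L.get ⟨L.length - i, by omega⟩ * Z (i - 1)) ∧
        L.get ⟨L.length - i, by omega⟩ * Z (i - 1) = Z i * H'' i) →
      IsHypercube (Z L.length) ∧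
      IsRNF hmap
        ((Z L.length :: List.ofFn fun j : Fin L.length => H'' (L.length - (j : ℕ))).filter
          (fun x => decide (x ≠ 1))) ∧
      (((Z L.length :: List.ofFn fun j : Fin L.length => H'' (L.length - (j : ℕ))).filter
          (fun x => decide (x ≠ 1))).prod = a * z) := by
  intro Z H'' hZ0 hrec
  -- `L = [h_m, …, h_1]`, so `h_i = L[m - i]`; with `n = m - i` the recursion reads as below.
  have hstep : ∀ n (hn : n < L.length),
      H'' (L.length - n) = hmap (L[n] * Z (L.length - (n + 1))) ∧
      L[n] * Z (L.length - (n + 1)) = Z (L.length - n) * H'' (L.length - n) := by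
    intro n hn
    have hidx : L.length - n - 1 = L.length - (n + 1) := by omega
    simpa only [List.get_eq_getElem, Nat.sub_sub_self hn.le, hidx]
      using hrec (L.length - n) (by omega) (by omega)
  simpa only [Nat.sub_zero, Nat.sub_self, hZ0, ← ha] using
    hrnf.mul_hypercube hM hspec (W := fun n => Z (L.length - n))
      (T := List.ofFn fun j : Fin L.length => H'' (L.length - (j : ℕ))) (by simp)
      (by simpa [hZ0] using hz) (fun n hn _ => by simpa using (hstep n hn).1)
      (fun n hn _ => by simpa using (hstep n hn).2)
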